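/- arXiv:1909.02676 — 9 statements merged into one kernel-verified Lean document; each statement's English description precedes it below -/
import Mathlib

section
/- Let n ≥ 1 and let σ be a permutation of {1,…,n} with permutation matrix P_σ. Then the set L(σ) of unit lower triangular real n×n matrices l such that P_σ l P_σ⁻¹ is lower triangular equals the set of unit lower triangular matrices l satisfying l_{ij} = 0 for all i > j with σ(i) < σ(j); moreover L(σ) is a subgroup of the invertible n×n matrices, i.e., it contains the identity and is closed under matrix multiplication and matrix inversion. -/
open Matrix

/-- The permutation matrix of `σ`: `(P_σ)_{ab} = 1` if `a = σ b`, else `0`. -/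
def permMat {n : ℕ} (σ : Equiv.Perm (Fin n)) : Matrix (Fin n) (Fin n) ℝ :=
  Matrix.of fun a b => if a = σ b then (1 : ℝ) else 0

/-- Unit lower triangular: `1`s on the diagonal, `0`s above it. -/
def IsUnitLower {n : ℕ} (M : Matrix (Fin n) (Fin n) ℝ) : Prop :=
  (∀ i, M i i = 1) ∧ ∀ i j : Fin n, i < j → M i j = 0

/-- Lower triangular: `0`s above the diagonal. -/
def IsLower {n : ℕ} (M : Matrix (Fin n) (Fin n) ℝ) : Prop :=
  ∀ i j : Fin n, i < j → M i j = 0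

/-- `L(σ)`: unit lower triangular matrices whose conjugate by `P_σ` is lower triangular. -/
def LSet {n : ℕ} (σ : Equiv.Perm (Fin n)) : Set (Matrix (Fin n) (Fin n) ℝ) :=
  { l | IsUnitLower l ∧ IsLower (permMat σ * l * (permMat σ)⁻¹) }

/-! Conjugation by `P_σ` is reindexing along `σ`, so `L(σ)` consists of the unit lower
triangular matrices that are also block triangular for the order on indices pulled back along
`σ`. Block triangularity for a fixed order is preserved by products and by inverses, and the
diagonal of a product of triangular matrices is the product of the diagonals; hence products
and inverses of unit lower triangular matrices stay unit lower triangular. -/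

open Function OrderDual

namespace Matrix

variable {m α R : Type*} [Fintype m]

theorem BlockTriangular.mul_apply_self [LinearOrder α] [NonUnitalNonAssocSemiring R]
    {M N : Matrix m m R} {b : m → α} (hb : Injective b) (hM : M.BlockTriangular b)
    (hN : N.BlockTriangular b) (i : m) : (M * N) i i = M i i * N i i := by
  rw [mul_apply, Finset.sum_eq_single i]
  · intro k _ hk
    rcases (hb.ne hk).lt_or_gt with h | h
    · rw [hM h, zero_mul]
    · rw [hN h, mul_zero]
  · simp

variable [LinearOrder m] [CommRing R] {M : Matrix m m R}

theorem IsLowerTriangular.det_eq_one (hM : M.IsLowerTriangular) (hdiag : ∀ i, M i i = 1) :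
    M.det = 1 := by
  simp [det_of_isLowerTriangular M hM, hdiag]

theorem IsLowerTriangular.blockTriangular_inv [LinearOrder α] (hM : M.IsLowerTriangular)
    (hdiag : ∀ i, M i i = 1) {b : m → α} (hb : M.BlockTriangular b) :
    M⁻¹.BlockTriangular b := by
  have : Invertible M := M.invertibleOfIsUnitDet (by simp [hM.det_eq_one hdiag])
  exact blockTriangular_inv_of_blockTriangular hb

theorem IsLowerTriangular.inv_apply_self (hM : M.IsLowerTriangular) (hdiag : ∀ i, M i i = 1)
    (i : m) : M⁻¹ i i = 1 := by
  have h := congrFun₂ (M.mul_nonsing_inv (by simp [hM.det_eq_one hdiag])) i i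
  rwa [BlockTriangular.mul_apply_self toDual.injective hM (hM.blockTriangular_inv hdiag hM),
    hdiag, one_mul, one_apply_eq] at h

end Matrix

section LSet

variable {n : ℕ}

theorem isUnitLower_iff (M : Matrix (Fin n) (Fin n) ℝ) :
    IsUnitLower M ↔ M.IsLowerTriangular ∧ ∀ i, M i i = 1 :=
  and_comm

theorem IsUnitLower.mul {M N : Matrix (Fin n) (Fin n) ℝ} (hM : IsUnitLower M)
    (hN : IsUnitLower N) : IsUnitLower (M * N) := by
  rw [isUnitLower_iff] at *
  refine ⟨hM.1.mul hN.1, fun i => ?_⟩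
  rw [BlockTriangular.mul_apply_self toDual.injective hM.1 hN.1, hM.2, hN.2, one_mul]

theorem IsUnitLower.inv {M : Matrix (Fin n) (Fin n) ℝ} (hM : IsUnitLower M) :
    IsUnitLower M⁻¹ := by
  rw [isUnitLower_iff] at *
  exact ⟨hM.1.blockTriangular_inv hM.2 hM.1, hM.1.inv_apply_self hM.2⟩

theorem permMat_eq_permMatrix (σ : Equiv.Perm (Fin n)) : permMat σ = σ⁻¹.permMatrix ℝ := by
  ext a b
  simp [permMat, PEquiv.toMatrix_apply, Equiv.symm_apply_eq]

theorem permMat_mul_mul_inv (σ : Equiv.Perm (Fin n)) (M : Matrix (Fin n) (Fin n) ℝ) :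
    permMat σ * M * (permMat σ)⁻¹ = reindex σ σ M := by
  have hinv : (permMat σ)⁻¹ = σ.permMatrix ℝ := by
    refine inv_eq_right_inv ?_
    rw [permMat_eq_permMatrix, ← permMatrix_mul, mul_inv_cancel, permMatrix_one]
  rw [hinv, permMat_eq_permMatrix, PEquiv.toMatrix_toPEquiv_mul, PEquiv.mul_toMatrix_toPEquiv]
  rfl

theorem mem_LSet_iff (σ : Equiv.Perm (Fin n)) (l : Matrix (Fin n) (Fin n) ℝ) :
    l ∈ LSet σ ↔ IsUnitLower l ∧ l.BlockTriangular (toDual ∘ σ) := by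
  rw [LSet, Set.mem_ofPred_eq, permMat_mul_mul_inv, ← blockTriangular_reindex_iff]
  rfl

end LSet

theorem stmt_0_general (n : ℕ) (σ : Equiv.Perm (Fin n)) :
    LSet σ = { l | IsUnitLower l ∧ ∀ i j : Fin n, j < i → σ i < σ j → l i j = 0 } ∧
    (1 : Matrix (Fin n) (Fin n) ℝ) ∈ LSet σ ∧
    (∀ l₁ l₂ : Matrix (Fin n) (Fin n) ℝ, l₁ ∈ LSet σ → l₂ ∈ LSet σ → l₁ * l₂ ∈ LSet σ) ∧
    (∀ l : Matrix (Fin n) (Fin n) ℝ, l ∈ LSet σ → l⁻¹ ∈ LSet σ) := by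
  simp_rw [mem_LSet_iff]
  refine ⟨?_, ⟨?_, blockTriangular_one⟩, fun l₁ l₂ h₁ h₂ => ⟨h₁.1.mul h₂.1, h₁.2.mul h₂.2⟩,
    fun l hl => ⟨hl.1.inv, ?_⟩⟩
  · ext l
    rw [mem_LSet_iff, Set.mem_ofPred_eq]
    refine and_congr_right fun hl => ⟨fun h i j _ hσ => h hσ, fun h i j hσ => ?_⟩
    rcases lt_trichotomy i j with hij | rfl | hij
    · exact hl.2 i j hij
    · exact absurd hσ (lt_irrefl _)
    · exact h i j hij hσ
  · exact (isUnitLower_iff 1).2 ⟨blockTriangular_one, one_apply_eq⟩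
  · obtain ⟨hlower, hdiag⟩ := (isUnitLower_iff l).1 hl.1
    exact hlower.blockTriangular_inv hdiag hl.2

theorem stmt_0 (n : ℕ) (hn : 1 ≤ n) (σ : Equiv.Perm (Fin n)) :
    LSet σ = { l | IsUnitLower l ∧ ∀ i j : Fin n, j < i → σ i < σ j → l i j = 0 } ∧
    (1 : Matrix (Fin n) (Fin n) ℝ) ∈ LSet σ ∧
    (∀ l₁ l₂ : Matrix (Fin n) (Fin n) ℝ, l₁ ∈ LSet σ → l₂ ∈ LSet σ → l₁ * l₂ ∈ LSet σ) ∧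
    (∀ l : Matrix (Fin n) (Fin n) ℝ, l ∈ LSet σ → l⁻¹ ∈ LSet σ) :=
  stmt_0_general n σ
end

section
/- Let n ≥ 1. For every k ∈ SO(n,ℝ) there exist a matrix u upper triangular with positive diagonal, a unit lower triangular matrix l, and a signed permutation matrix q with det q = 1, such that k = u·l·q. -/
open Matrix

/-- Upper triangular with strictly positive diagonal entries. -/
def IsUpperPos {n : ℕ} (M : Matrix (Fin n) (Fin n) ℝ) : Prop :=
  (∀ i j : Fin n, j < i → M i j = 0) ∧ ∀ i, 0 < M i i

/-- `SO(n,ℝ)`. -/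
def IsSO {n : ℕ} (k : Matrix (Fin n) (Fin n) ℝ) : Prop :=
  kᵀ * k = 1 ∧ k.det = 1

/-- Signed permutation matrix: exactly one nonzero entry, equal to `±1`,
in each row and column. -/
def IsSignedPerm {n : ℕ} (q : Matrix (Fin n) (Fin n) ℝ) : Prop :=
  ∃ σ : Equiv.Perm (Fin n), ∃ ε : Fin n → ℝ, (∀ i, ε i = 1 ∨ ε i = -1) ∧
    ∀ a b : Fin n, q a b = if a = σ b then ε b else 0

/-!
Column-pivoted Gaussian elimination from the bottom row: a signed column permutation puts a
positive pivot `p` in the bottom-right corner, and `!![D, c; r, p]` then factors through the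
Schur complement `D - p⁻¹ c r`, which is invertible and of smaller size. Hence every invertible
real matrix is `u * l * q` with `u` upper triangular with positive diagonal, `l` unit lower
triangular and `q` a signed permutation. For `k ∈ SO(n)` we get
`1 = det k = det u * det q` with `det u > 0` and `det q = ±1`, so `det q = 1`.
-/

namespace Matrix

variable {R : Type*} {n : ℕ}

/-- The block matrix `!![M, c; r, p]`, with the new row and column placed last. -/
def border (M : Matrix (Fin n) (Fin n) R) (c r : Fin n → R) (p : R) :
    Matrix (Fin (n + 1)) (Fin (n + 1)) R :=
  of <| Fin.snoc (α := fun _ => Fin (n + 1) → R) (fun i => Fin.snoc (M i) (c i)) (Fin.snoc r p)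

section Entries

variable (M : Matrix (Fin n) (Fin n) R) (c r : Fin n → R) (p : R)

@[simp] theorem border_castSucc_castSucc (i j : Fin n) :
    border M c r p i.castSucc j.castSucc = M i j := by simp [border]

@[simp] theorem border_castSucc_last (i : Fin n) :
    border M c r p i.castSucc (Fin.last n) = c i := by simp [border]

@[simp] theorem border_last_castSucc (j : Fin n) :
    border M c r p (Fin.last n) j.castSucc = r j := by simp [border]

@[simp] theorem border_last_last : border M c r p (Fin.last n) (Fin.last n) = p := by
  simp [border]

@[simp] theorem border_submatrix_castSucc :
    (border M c r p).submatrix Fin.castSucc Fin.castSucc = M := by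
  ext i j
  simp

theorem transpose_border : (border M c r p)ᵀ = border Mᵀ r c p := by
  ext i j
  induction i using Fin.lastCases <;> induction j using Fin.lastCases <;> simp

end Entries

theorem eq_border (A : Matrix (Fin (n + 1)) (Fin (n + 1)) R) :
    A = border (A.submatrix Fin.castSucc Fin.castSucc) (fun i => A i.castSucc (Fin.last n))
      (fun j => A (Fin.last n) j.castSucc) (A (Fin.last n) (Fin.last n)) := by
  ext i j
  induction i using Fin.lastCases <;> induction j using Fin.lastCases <;> simp

theorem border_mul_border [CommRing R] (M M' : Matrix (Fin n) (Fin n) R) (c r c' r' : Fin n → R)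
    (p p' : R) :
    border M c r p * border M' c' r' p' =
      border (M * M' + vecMulVec c r') (M *ᵥ c' + p' • c) (r ᵥ* M' + p • r')
        (r ⬝ᵥ c' + p * p') := by
  ext i j
  induction i using Fin.lastCases <;> induction j using Fin.lastCases <;>
    simp [mul_apply, Fin.sum_univ_castSucc, mulVec, vecMul, dotProduct, vecMulVec_apply, mul_comm]

theorem det_border_zero_row [CommRing R] (M : Matrix (Fin n) (Fin n) R) (c : Fin n → R) (p : R) :
    (border M c 0 p).det = p * M.det := by
  rw [det_succ_row _ (Fin.last n), Fin.sum_univ_castSucc]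
  simp [Fin.succAbove_last, ← two_mul, pow_mul]

theorem det_border {K : Type*} [Field K] (D : Matrix (Fin n) (Fin n) K) (c r : Fin n → K) {p : K}
    (hp : p ≠ 0) : (border D c r p).det = p * (D - p⁻¹ • vecMulVec c r).det := by
  have hfac : border D c r p =
      border (D - p⁻¹ • vecMulVec c r) c 0 p * border 1 0 (p⁻¹ • r) 1 := by
    rw [border_mul_border]
    congr 1 <;> simp [smul_smul, hp]
  have hunit : (border (1 : Matrix (Fin n) (Fin n) K) 0 (p⁻¹ • r) 1).det = 1 := by
    rw [← det_transpose, transpose_border, det_border_zero_row]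
    simp
  rw [hfac, det_mul, hunit, det_border_zero_row, mul_one]

section SignedPerm

variable {ι : Type*} [DecidableEq ι]

def signedPermMatrix [Zero R] (σ : Equiv.Perm ι) (ε : ι → R) : Matrix ι ι R :=
  of fun a b => if a = σ b then ε b else 0

theorem mul_signedPermMatrix_apply [NonUnitalNonAssocSemiring R] [Fintype ι] (A : Matrix ι ι R)
    (σ : Equiv.Perm ι) (ε : ι → R) (a b : ι) :
    (A * signedPermMatrix σ ε) a b = A a (σ b) * ε b := by
  simp [mul_apply, signedPermMatrix]

theorem signedPermMatrix_mul_signedPermMatrix [NonUnitalNonAssocSemiring R] [Fintype ι]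
    (σ τ : Equiv.Perm ι) (ε δ : ι → R) :
    signedPermMatrix σ ε * signedPermMatrix τ δ =
      signedPermMatrix (σ * τ) fun b => ε (τ b) * δ b := by
  ext a b
  rw [mul_signedPermMatrix_apply]
  by_cases h : a = σ (τ b) <;> simp [signedPermMatrix, h]

theorem transpose_signedPermMatrix [Zero R] (σ : Equiv.Perm ι) (ε : ι → R) :
    (signedPermMatrix σ ε)ᵀ = signedPermMatrix σ⁻¹ fun b => ε (σ⁻¹ b) := by
  ext a b
  simp only [transpose_apply, signedPermMatrix, of_apply]
  by_cases h : b = σ a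
  · simp [h]
  · rw [if_neg h, if_neg]
    rintro rfl
    simp at h

theorem transpose_signedPermMatrix_mul_self [NonAssocSemiring R] [Fintype ι] (σ : Equiv.Perm ι)
    {ε : ι → R} (hε : ∀ i, ε i * ε i = 1) :
    (signedPermMatrix σ ε)ᵀ * signedPermMatrix σ ε = 1 := by
  ext a b
  rw [transpose_signedPermMatrix, mul_signedPermMatrix_apply]
  simp [signedPermMatrix, one_apply, hε]

theorem border_signedPermMatrix [Zero R] [One R] (σ : Equiv.Perm (Fin n)) (ε : Fin n → R) :
    border (signedPermMatrix σ ε) 0 0 1 =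
      signedPermMatrix (finSuccEquivLast.symm.permCongr σ.optionCongr)
        (Fin.snoc (α := fun _ => R) ε 1) := by
  ext i j
  induction i using Fin.lastCases <;> induction j using Fin.lastCases <;>
    simp [signedPermMatrix, Equiv.permCongr_apply, finSuccEquivLast_symm_some,
      (Fin.castSucc_ne_last _).symm]

end SignedPerm

end Matrix

theorem isSignedPerm_iff {n : ℕ} {q : Matrix (Fin n) (Fin n) ℝ} :
    IsSignedPerm q ↔ ∃ σ ε, (∀ i, ε i * ε i = 1) ∧ q = signedPermMatrix σ ε := by
  simp only [IsSignedPerm, mul_self_eq_one_iff, ← ext_iff, signedPermMatrix, of_apply]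

namespace IsSignedPerm

variable {n : ℕ} {q q' : Matrix (Fin n) (Fin n) ℝ}

theorem mul (hq : IsSignedPerm q) (hq' : IsSignedPerm q') : IsSignedPerm (q * q') := by
  obtain ⟨σ, ε, hε, rfl⟩ := isSignedPerm_iff.1 hq
  obtain ⟨τ, δ, hδ, rfl⟩ := isSignedPerm_iff.1 hq'
  rw [signedPermMatrix_mul_signedPermMatrix]
  exact isSignedPerm_iff.2
    ⟨_, _, fun b => by linear_combination δ b * δ b * hε (τ b) + hδ b, rfl⟩

theorem transpose (hq : IsSignedPerm q) : IsSignedPerm qᵀ := by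
  obtain ⟨σ, ε, hε, rfl⟩ := isSignedPerm_iff.1 hq
  rw [transpose_signedPermMatrix]
  exact isSignedPerm_iff.2 ⟨_, _, fun b => hε _, rfl⟩

theorem transpose_mul_self (hq : IsSignedPerm q) : qᵀ * q = 1 := by
  obtain ⟨σ, ε, hε, rfl⟩ := isSignedPerm_iff.1 hq
  exact transpose_signedPermMatrix_mul_self σ hε

theorem mul_transpose_self (hq : IsSignedPerm q) : q * qᵀ = 1 :=
  mul_eq_one_comm.1 hq.transpose_mul_self

theorem det_mul_self (hq : IsSignedPerm q) : q.det * q.det = 1 := by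
  simpa using congrArg det hq.transpose_mul_self

theorem border (hq : IsSignedPerm q) : IsSignedPerm (border q 0 0 1) := by
  obtain ⟨σ, ε, hε, rfl⟩ := isSignedPerm_iff.1 hq
  rw [border_signedPermMatrix]
  refine isSignedPerm_iff.2 ⟨_, _, fun i => ?_, rfl⟩
  induction i using Fin.lastCases <;> simp [hε]

end IsSignedPerm

theorem IsUpperPos.border {n : ℕ} {u : Matrix (Fin n) (Fin n) ℝ} (hu : IsUpperPos u)
    (c : Fin n → ℝ) {p : ℝ} (hp : 0 < p) : IsUpperPos (border u c 0 p) := by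
  refine ⟨fun i j hji => ?_, fun i => ?_⟩
  · induction i using Fin.lastCases <;> induction j using Fin.lastCases <;>
      simp_all [hu.1, (Fin.le_last _).not_gt]
  · induction i using Fin.lastCases <;> simp [hp, hu.2]

theorem IsUnitLower.border {n : ℕ} {l : Matrix (Fin n) (Fin n) ℝ} (hl : IsUnitLower l)
    (v : Fin n → ℝ) : IsUnitLower (border l 0 v 1) := by
  refine ⟨fun i => ?_, fun i j hij => ?_⟩
  · induction i using Fin.lastCases <;> simp [hl.1]
  · induction i using Fin.lastCases <;> induction j using Fin.lastCases <;>
      simp_all [hl.2, (Fin.le_last _).not_gt]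

theorem IsUpperPos.det_pos {n : ℕ} {u : Matrix (Fin n) (Fin n) ℝ} (hu : IsUpperPos u) :
    0 < u.det := by
  rw [det_of_isUpperTriangular fun i j hji => hu.1 i j hji]
  exact Finset.prod_pos fun i _ => hu.2 i

theorem IsUnitLower.det_eq_one {n : ℕ} {l : Matrix (Fin n) (Fin n) ℝ} (hl : IsUnitLower l) :
    l.det = 1 := by
  rw [det_of_isLowerTriangular l fun i j hij => hl.2 i j hij]
  exact Finset.prod_eq_one fun i _ => hl.1 i

theorem exists_isSignedPerm_mul_apply_last_last_pos {n : ℕ}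
    {A : Matrix (Fin (n + 1)) (Fin (n + 1)) ℝ} (hA : A.det ≠ 0) :
    ∃ q : Matrix (Fin (n + 1)) (Fin (n + 1)) ℝ,
      IsSignedPerm q ∧ 0 < (A * q) (Fin.last n) (Fin.last n) := by
  obtain ⟨j, hj⟩ : ∃ j, A (Fin.last n) j ≠ 0 := by
    by_contra! h
    exact hA (det_eq_zero_of_row_eq_zero _ h)
  let s : ℝ := if 0 < A (Fin.last n) j then 1 else -1
  refine ⟨signedPermMatrix (Equiv.swap j (Fin.last n)) fun _ => s,
    isSignedPerm_iff.2 ⟨_, _, fun _ => by unfold s; split_ifs <;> norm_num, rfl⟩, ?_⟩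
  rw [mul_signedPermMatrix_apply, Equiv.swap_apply_right]
  unfold s
  split_ifs with h
  · simpa using h
  · simpa using lt_of_le_of_ne (not_lt.1 h) hj

def HasULQDecomposition {n : ℕ} (A : Matrix (Fin n) (Fin n) ℝ) : Prop :=
  ∃ u l q, IsUpperPos u ∧ IsUnitLower l ∧ IsSignedPerm q ∧ A = u * l * q

theorem HasULQDecomposition.mul {n : ℕ} {A q : Matrix (Fin n) (Fin n) ℝ}
    (hA : HasULQDecomposition A) (hq : IsSignedPerm q) : HasULQDecomposition (A * q) := by
  obtain ⟨u, l, q', hu, hl, hq', rfl⟩ := hA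
  exact ⟨u, l, q' * q, hu, hl, hq'.mul hq, by simp only [Matrix.mul_assoc]⟩

/-- `!![D, c; r, p] = !![u, c; 0, p] * !![l, 0; v, 1] * !![q, 0; 0, 1]` with `v = p⁻¹ r qᵀ`,
using `qᵀ q = 1`. -/
theorem HasULQDecomposition.border {n : ℕ} {D : Matrix (Fin n) (Fin n) ℝ} {c r : Fin n → ℝ}
    {p : ℝ} (hp : 0 < p) (hB : HasULQDecomposition (D - p⁻¹ • vecMulVec c r)) :
    HasULQDecomposition (border D c r p) := by
  obtain ⟨u, l, q, hu, hl, hq, hB⟩ := hB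
  refine ⟨_, _, _, hu.border c hp, hl.border (p⁻¹ • r ᵥ* qᵀ), hq.border, ?_⟩
  rw [border_mul_border, border_mul_border]
  simp [Matrix.add_mul, vecMulVec_mul, hq.transpose_mul_self, ← hB, smul_smul, hp.ne']

theorem hasULQDecomposition_of_det_ne_zero :
    ∀ {n : ℕ} {A : Matrix (Fin n) (Fin n) ℝ}, A.det ≠ 0 → HasULQDecomposition A
  | 0, A, _ => ⟨1, 1, 1, ⟨isEmptyElim, isEmptyElim⟩, ⟨isEmptyElim, isEmptyElim⟩,
      isSignedPerm_iff.2 ⟨1, 1, isEmptyElim, Subsingleton.elim _ _⟩, Subsingleton.elim _ _⟩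
  | n + 1, A, hA => by
    obtain ⟨q, hq, hp⟩ := exists_isSignedPerm_mul_apply_last_last_pos hA
    have hAq : (A * q).det ≠ 0 := by
      rw [det_mul]
      exact mul_ne_zero hA (left_ne_zero_of_mul_eq_one hq.det_mul_self)
    have hdec : HasULQDecomposition (A * q) := by
      rw [eq_border (A * q)] at hAq ⊢
      rw [det_border _ _ _ hp.ne'] at hAq
      exact .border hp (hasULQDecomposition_of_det_ne_zero (right_ne_zero_of_mul hAq))
    simpa [Matrix.mul_assoc, hq.mul_transpose_self] using hdec.mul hq.transpose

theorem stmt_6_general (n : ℕ) (k : Matrix (Fin n) (Fin n) ℝ) (hk : IsSO k) :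
    ∃ u l q : Matrix (Fin n) (Fin n) ℝ,
      IsUpperPos u ∧ IsUnitLower l ∧ IsSignedPerm q ∧ q.det = 1 ∧ k = u * l * q := by
  obtain ⟨u, l, q, hu, hl, hq, rfl⟩ := hasULQDecomposition_of_det_ne_zero (hk.2 ▸ one_ne_zero)
  refine ⟨u, l, q, hu, hl, hq, ?_, rfl⟩
  have hdet : u.det * q.det = 1 := by simpa [hl.det_eq_one] using hk.2
  have hq_pos : 0 < q.det := pos_of_mul_pos_right (hdet ▸ one_pos) hu.det_pos.le
  exact (mul_self_eq_one_iff.1 hq.det_mul_self).resolve_right (by linarith)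

theorem stmt_6 (n : ℕ) (hn : 1 ≤ n) (k : Matrix (Fin n) (Fin n) ℝ) (hk : IsSO k) :
    ∃ u l q : Matrix (Fin n) (Fin n) ℝ,
      IsUpperPos u ∧ IsUnitLower l ∧ IsSignedPerm q ∧ q.det = 1 ∧ k = u * l * q :=
  stmt_6_general n k hk
end

section
/- Let n ≥ 1 and let p be a signed permutation matrix. If p = u·l for some matrix u upper triangular with positive diagonal and some unit lower triangular matrix l, then p is a diagonal matrix (with diagonal entries ±1). -/
open Matrix

theorem stmt_8 (n : ℕ) (hn : 1 ≤ n) (p : Matrix (Fin n) (Fin n) ℝ) (hp : IsSignedPerm p)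
    (u l : Matrix (Fin n) (Fin n) ℝ) (hu : IsUpperPos u) (hl : IsUnitLower l)
    (h : p = u * l) :
    (∀ i j : Fin n, i ≠ j → p i j = 0) ∧ ∀ i : Fin n, p i i = 1 ∨ p i i = -1 := by
  obtain ⟨σ, ε, hε, hq⟩ := hp
  obtain ⟨hud, hup⟩ := hu
  obtain ⟨hld, hll⟩ := hl
  have key : ∀ m : ℕ, ∀ a : Fin n, n - a.val ≤ m →
      σ a = a ∧ ∀ b : Fin n, b < a → l a b = 0 := by
    intro m
    induction m with
    | zero => intro a ha; exact absurd ha (by have := a.isLt; omega)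
    | succ m ih =>
      intro a ha
      have hsum : ∀ b : Fin n, b ≤ a → p a b = u a a * l a b := by
        intro b hb
        have hmul : p a b = ∑ k, u a k * l k b := by rw [h, Matrix.mul_apply]
        rw [hmul]
        apply Finset.sum_eq_single a
        · intro k _ hk
          rcases lt_or_gt_of_ne hk with hlt | hgt
          · rw [hud a k hlt, zero_mul]
          · have : l k b = 0 :=
              (ih k (by have hk2 := Fin.lt_iff_val_lt_val.mp hgt; omega)).2 b
                (lt_of_le_of_lt hb hgt)
            rw [this, mul_zero]
        · intro hmem; exact absurd (Finset.mem_univ a) hmem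
      have hpaa : p a a = u a a := by
        rw [hsum a le_rfl, hld a, mul_one]
      have hσa : σ a = a := by
        by_contra hne
        have : p a a = 0 := by rw [hq a a, if_neg (fun hc => hne hc.symm)]
        rw [hpaa] at this
        exact absurd this (ne_of_gt (hup a))
      refine ⟨hσa, fun b hb => ?_⟩
      have hpab : p a b = 0 := by
        rw [hq a b]
        refine if_neg (fun hc => ?_)
        have : σ b = σ a := by rw [hσa, ← hc]
        exact absurd (σ.injective this) (ne_of_lt hb)
      have := hsum b (le_of_lt hb)
      rw [hpab] at this
      rcases mul_eq_zero.mp this.symm with h0 | h0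
      · exact absurd h0 (ne_of_gt (hup a))
      · exact h0
  have hσ : ∀ a : Fin n, σ a = a := fun a => (key n a (by omega)).1
  constructor
  · intro i j hij
    rw [hq i j, if_neg (fun hc => hij (hc.trans (hσ j)))]
  · intro i
    rw [hq i i, if_pos (hσ i).symm]
    exact hε i
end

section
/- Let n ≥ 1, let H be a real diagonal n×n matrix whose diagonal entries are strictly decreasing (H_{11} > H_{22} > … > H_{nn}), and let k ∈ SO(n,ℝ). If U₁, U₂ are strictly upper triangular and L₁, L₂ are strictly lower triangular matrices such that H + U₁ = k(H + L₁)kᵀ and H + U₂ = k(H + L₂)kᵀ, then U₁ = U₂ and L₁ = L₂. In other words, the affine subspace H + {strictly upper triangular matrices} meets each set k(H + {strictly lower triangular matrices})kᵀ in at most one point. -/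
open Matrix

/-- Strictly upper triangular: `0`s on and below the diagonal. -/
def IsStrictUpper {n : ℕ} (M : Matrix (Fin n) (Fin n) ℝ) : Prop :=
  ∀ i j : Fin n, j ≤ i → M i j = 0

/-- Strictly lower triangular: `0`s on and above the diagonal. -/
def IsStrictLower {n : ℕ} (M : Matrix (Fin n) (Fin n) ℝ) : Prop :=
  ∀ i j : Fin n, i ≤ j → M i j = 0

/-!
Put `A = H + U₂` and `B = H + L₂`, so that `A k = k B`. Since `A` is upper triangular with
distinct diagonal entries, its left eigenvectors are the rows of an invertible upper triangular
`P` with `P A = H P`; transposing, `B Q = Q H` for an invertible lower triangular `Q`. Then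
`P k Q` commutes with `H`, hence is diagonal, so `R = P k` is lower triangular. Now
`S = U₁ - U₂` and `T = L₁ - L₂` satisfy `S k = k T`, so `P S P⁻¹ = R T R⁻¹` is both strictly
upper and lower triangular, hence zero.
-/

open Finset Function

namespace Matrix

variable {K ι : Type*} [Field K] [Fintype ι] [LinearOrder ι]

theorem IsUpperTriangular.exists_left_eigenvector {A : Matrix ι ι K} (hA : A.IsUpperTriangular)
    (hd : Injective A.diag) (j : ι) :
    ∃ v : ι → K, v ᵥ* A = A j j • v ∧ v j = 1 ∧ ∀ i < j, v i = 0 := by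
  classical
  have hdet : (A - A j j • (1 : Matrix ι ι K)).det = 0 := by
    rw [det_of_isUpperTriangular
      (hA.sub (by rw [smul_one_eq_diagonal]; exact blockTriangular_diagonal _))]
    exact prod_eq_zero (mem_univ j) (by simp)
  obtain ⟨w, hw0, hw⟩ := exists_vecMul_eq_zero_iff.mpr hdet
  have hwA : w ᵥ* A = A j j • w := by
    rwa [vecMul_sub, sub_eq_zero, vecMul_smul, vecMul_one] at hw
  obtain ⟨m, hm, hmin⟩ := (univ.filter (w · ≠ 0)).exists_min_image id
    (by simpa [Finset.Nonempty, funext_iff] using hw0)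
  simp only [mem_filter, mem_univ, true_and, id] at hm hmin
  have hbelow : ∀ i < m, w i = 0 := fun i hi => by_contra fun h => (hmin i h).not_gt hi
  -- at the first nonzero coordinate `m` of `w`, the eigen-equation reads `w m * A m m = A j j * w m`
  have hmj : m = j := by
    apply hd
    have hrow : w m * A m m = A j j * w m := by
      rw [← smul_eq_mul (A j j), ← Pi.smul_apply, ← hwA, vecMul, dotProduct, sum_eq_single m]
      · intro i _ hi
        rcases hi.lt_or_gt with hi | hi
        · rw [hbelow i hi, zero_mul]
        · rw [hA hi, mul_zero]
      · simp
    simpa [hm, mul_comm] using hrow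
  subst hmj
  exact ⟨(w m)⁻¹ • w, by rw [smul_vecMul, hwA, smul_comm], by simp [hm],
    fun i hi => by simp [hbelow i hi]⟩

theorem IsUpperTriangular.exists_isUpperTriangular_mul_eq_diagonal_mul {A : Matrix ι ι K}
    (hA : A.IsUpperTriangular) (hd : Injective A.diag) :
    ∃ P : Matrix ι ι K, P.IsUpperTriangular ∧ IsUnit P.det ∧ P * A = diagonal A.diag * P := by
  choose v hvA hvj hv0 using hA.exists_left_eigenvector hd
  have hP : (of v).IsUpperTriangular := fun i j hij => hv0 i j hij
  refine ⟨of v, hP, by simp [det_of_isUpperTriangular hP, hvj], ?_⟩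
  ext i j
  rw [diagonal_mul]
  exact congrFun (hvA i) j

theorem IsLowerTriangular.exists_isLowerTriangular_mul_eq_mul_diagonal {B : Matrix ι ι K}
    (hB : B.IsLowerTriangular) (hd : Injective B.diag) :
    ∃ Q : Matrix ι ι K, Q.IsLowerTriangular ∧ IsUnit Q.det ∧ B * Q = Q * diagonal B.diag := by
  obtain ⟨P, hP, hPdet, hPB⟩ :=
    IsUpperTriangular.exists_isUpperTriangular_mul_eq_diagonal_mul (A := Bᵀ) hB.transpose hd
  refine ⟨Pᵀ, hP.transpose, by rwa [det_transpose], ?_⟩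
  simpa [transpose_mul, diagonal_transpose] using congrArg transpose hPB

theorem eq_diagonal_of_diagonal_mul_eq_mul_diagonal {d : ι → K} (hd : Injective d)
    {X : Matrix ι ι K} (h : diagonal d * X = X * diagonal d) : X = diagonal X.diag := by
  ext i j
  rcases eq_or_ne i j with rfl | hij
  · simp
  have hij' := congrFun (congrFun h i) j
  rw [diagonal_mul, mul_diagonal, mul_comm, ← sub_eq_zero, ← mul_sub] at hij'
  simpa [diagonal_apply_ne _ hij, sub_ne_zero.mpr (hd.ne hij)] using hij'

theorem isLowerTriangular_mul_of_mul_eq_diagonal_mul {A B g P : Matrix ι ι K}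
    (hB : B.IsLowerTriangular) (hAB : A.diag = B.diag) (hd : Injective A.diag)
    (hPA : P * A = diagonal A.diag * P) (hAg : A * g = g * B) :
    (P * g).IsLowerTriangular := by
  obtain ⟨Q, hQ, hQdet, hBQ⟩ := hB.exists_isLowerTriangular_mul_eq_mul_diagonal (hAB ▸ hd)
  have := Q.invertibleOfIsUnitDet hQdet
  have hcomm : diagonal A.diag * (P * g * Q) = P * g * Q * diagonal A.diag := calc
    _ = P * A * g * Q := by rw [hPA]; simp only [mul_assoc]
    _ = P * g * (B * Q) := by rw [mul_assoc P A, hAg]; simp only [mul_assoc]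
    _ = P * g * Q * diagonal A.diag := by rw [hBQ, hAB]; simp only [mul_assoc]
  have hPg : P * g = diagonal (P * g * Q).diag * Q⁻¹ := by
    rw [← eq_diagonal_of_diagonal_mul_eq_mul_diagonal hd hcomm,
      mul_inv_cancel_right_of_invertible]
  rw [hPg]
  exact (blockTriangular_diagonal _).mul (blockTriangular_inv_of_blockTriangular hQ)

theorem IsUpperTriangular.mul_mul_apply_eq_zero {A S C : Matrix ι ι K} (hA : A.IsUpperTriangular)
    (hS : ∀ i j, j ≤ i → S i j = 0) (hC : C.IsUpperTriangular) {i j : ι} (hij : j ≤ i) :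
    (A * S * C) i j = 0 := by
  rw [mul_apply]
  refine sum_eq_zero fun l _ => ?_
  rcases lt_or_ge j l with hjl | hlj
  · rw [hC hjl, mul_zero]
  · refine mul_eq_zero_of_left ?_ _
    rw [mul_apply]
    refine sum_eq_zero fun m _ => ?_
    rcases lt_or_ge m i with hmi | him
    · rw [hA hmi, zero_mul]
    · rw [hS m l (hlj.trans (hij.trans him)), mul_zero]

theorem strictUpper_eq_zero_of_mul_eq_mul {A B g S T : Matrix ι ι K}
    (hA : A.IsUpperTriangular) (hB : B.IsLowerTriangular) (hAB : A.diag = B.diag)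
    (hd : Injective A.diag) (hg : IsUnit g.det) (hAg : A * g = g * B)
    (hS : ∀ i j, j ≤ i → S i j = 0) (hT : T.IsLowerTriangular) (hST : S * g = g * T) :
    S = 0 := by
  obtain ⟨P, hP, hPdet, hPA⟩ := hA.exists_isUpperTriangular_mul_eq_diagonal_mul hd
  have hR := isLowerTriangular_mul_of_mul_eq_diagonal_mul hB hAB hd hPA hAg
  have := P.invertibleOfIsUnitDet hPdet
  have := (P * g).invertibleOfIsUnitDet (by rw [det_mul]; exact hPdet.mul hg)
  have hconj : P * S * P⁻¹ = P * g * T * (P * g)⁻¹ := by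
    rw [← mul_inv_cancel_right_of_invertible (P * S * P⁻¹) (A := P * g), mul_assoc (P * S),
      inv_mul_cancel_left_of_invertible]
    simp only [mul_assoc]
    rw [← mul_assoc S, hST, mul_assoc]
  have hlow : (P * S * P⁻¹).IsLowerTriangular := by
    rw [hconj]
    exact (hR.mul hT).mul (blockTriangular_inv_of_blockTriangular hR)
  have hzero : P * S * P⁻¹ = 0 := by
    ext i j
    rcases lt_or_ge i j with hij | hji
    · exact hlow hij
    · exact hP.mul_mul_apply_eq_zero hS (blockTriangular_inv_of_blockTriangular hP) hji
  rw [← inv_mul_cancel_left_of_invertible (A := P) S,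
    ← inv_mul_cancel_right_of_invertible (P * S) (A := P), hzero, zero_mul, mul_zero]

end Matrix

theorem stmt_10_general (n : ℕ) (d : Fin n → ℝ)
    (hd : ∀ i j : Fin n, i < j → d j < d i)
    (k : Matrix (Fin n) (Fin n) ℝ) (hk : IsSO k)
    (U₁ U₂ L₁ L₂ : Matrix (Fin n) (Fin n) ℝ)
    (hU₁ : IsStrictUpper U₁) (hU₂ : IsStrictUpper U₂)
    (hL₁ : IsStrictLower L₁) (hL₂ : IsStrictLower L₂)
    (h₁ : Matrix.diagonal d + U₁ = k * (Matrix.diagonal d + L₁) * kᵀ)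
    (h₂ : Matrix.diagonal d + U₂ = k * (Matrix.diagonal d + L₂) * kᵀ) :
    U₁ = U₂ ∧ L₁ = L₂ := by
  have hkdet : IsUnit k.det := by rw [hk.2]; exact isUnit_one
  have intertwine {U L : Matrix (Fin n) (Fin n) ℝ}
      (h : diagonal d + U = k * (diagonal d + L) * kᵀ) :
      (diagonal d + U) * k = k * (diagonal d + L) := by
    rw [h, mul_assoc, hk.1, mul_one]
  have hdiff : (U₁ - U₂) * k = k * (L₁ - L₂) := by
    rw [← add_sub_add_left_eq_sub _ _ (diagonal d), sub_mul, intertwine h₁, intertwine h₂,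
      ← mul_sub, add_sub_add_left_eq_sub]
  have hA : (diagonal d + U₂).IsUpperTriangular :=
    (blockTriangular_diagonal d).add fun i j hij => hU₂ i j hij.le
  have hB : (diagonal d + L₂).IsLowerTriangular :=
    (blockTriangular_diagonal d).add fun i j hij => hL₂ i j hij.le
  have hAd : (diagonal d + U₂).diag = d := funext fun i => by simp [hU₂ i i le_rfl]
  have hBd : (diagonal d + L₂).diag = d := funext fun i => by simp [hL₂ i i le_rfl]
  have hU : U₁ - U₂ = 0 := strictUpper_eq_zero_of_mul_eq_mul hA hB (hAd.trans hBd.symm)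
    (by rw [hAd]; exact StrictAnti.injective fun i j hij => hd i j hij) hkdet (intertwine h₂)
    (fun i j hij => by simp [hU₁ i j hij, hU₂ i j hij])
    (fun i j hij => by simp [hL₁ i j hij.le, hL₂ i j hij.le]) hdiff
  have hL : L₁ - L₂ = 0 := by
    rw [← nonsing_inv_mul_cancel_left k (L₁ - L₂) hkdet, ← hdiff, hU, zero_mul, mul_zero]
  exact ⟨sub_eq_zero.mp hU, sub_eq_zero.mp hL⟩

theorem stmt_10 (n : ℕ) (hn : 1 ≤ n) (d : Fin n → ℝ)
    (hd : ∀ i j : Fin n, i < j → d j < d i)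
    (k : Matrix (Fin n) (Fin n) ℝ) (hk : IsSO k)
    (U₁ U₂ L₁ L₂ : Matrix (Fin n) (Fin n) ℝ)
    (hU₁ : IsStrictUpper U₁) (hU₂ : IsStrictUpper U₂)
    (hL₁ : IsStrictLower L₁) (hL₂ : IsStrictLower L₂)
    (h₁ : Matrix.diagonal d + U₁ = k * (Matrix.diagonal d + L₁) * kᵀ)
    (h₂ : Matrix.diagonal d + U₂ = k * (Matrix.diagonal d + L₂) * kᵀ) :
    U₁ = U₂ ∧ L₁ = L₂ :=
  stmt_10_general n d hd k hk U₁ U₂ L₁ L₂ hU₁ hU₂ hL₁ hL₂ h₁ h₂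
end

section
/- Let n ≥ 1 and let p be a profile. If a real n×n matrix M has profile p and R is an upper triangular real n×n matrix, then the commutator MR − RM has profile p. (That is, the subspace of matrices with profile p is a module under taking Lie bracket with upper triangular matrices.) -/
open Matrix

/-- A profile: a set of index pairs `(i,j)` with `j < i`, closed under moving
towards the diagonal. -/
def IsProfile {n : ℕ} (p : Set (Fin n × Fin n)) : Prop :=
  (∀ ij ∈ p, ij.2 < ij.1) ∧
  ∀ ij ∈ p, ∀ i' j' : Fin n, j' < i' → i' ≤ ij.1 → ij.2 ≤ j' → (i', j') ∈ p

/-- `M` has profile `p` if all its strictly lower triangular entries outside `p` vanish. -/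
def HasProfile {n : ℕ} (M : Matrix (Fin n) (Fin n) ℝ) (p : Set (Fin n × Fin n)) : Prop :=
  ∀ i j : Fin n, j < i → (i, j) ∉ p → M i j = 0

theorem stmt_12 (n : ℕ) (hn : 1 ≤ n) (p : Set (Fin n × Fin n)) (hp : IsProfile p)
    (M R : Matrix (Fin n) (Fin n) ℝ) (hM : HasProfile M p)
    (hR : ∀ i j : Fin n, j < i → R i j = 0) :
    HasProfile (M * R - R * M) p := by
  intro i j hji hij
  simp only [Matrix.sub_apply, Matrix.mul_apply]
  have h1 : ∀ k, M i k * R k j = 0 := by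
    intro k
    rcases lt_or_ge j k with h | h
    · rw [hR k j h, mul_zero]
    · have hki : k < i := lt_of_le_of_lt h hji
      have : (i, k) ∉ p := fun hmem =>
        hij (hp.2 (i, k) hmem i j hji le_rfl h)
      rw [hM i k hki this, zero_mul]
  have h2 : ∀ k, R i k * M k j = 0 := by
    intro k
    rcases lt_or_ge k i with h | h
    · rw [hR i k h, zero_mul]
    · have hjk : j < k := lt_of_lt_of_le hji h
      have : (k, j) ∉ p := fun hmem =>
        hij (hp.2 (k, j) hmem i j hji h le_rfl)
      rw [hM k j hjk this, mul_zero]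
  simp [h1, h2]
end

section
/- Let n ≥ 1 and let p be a profile. If a real n×n matrix X has profile p, then the Toda vector field value T(X) = X·π_k(X) − π_k(X)·X has profile p, where π_k(X) = X − π_u(X). -/
/-!
Writing `U = π_u(X)`, we have `π_k(X) = X - U`, so `T(X) = [X, X - U] = U X - X U`. Since `U` is
upper triangular, `(U X)_{ij}` only involves entries `X_{kj}` with `k ≥ i`, and `(X U)_{ij}` only
entries `X_{ik}` with `k ≤ j`; for `i > j` with `(i,j) ∉ p` all of these vanish because a profile
is closed under moving towards the diagonal.
-/

open Matrix

/-- The upper triangular part `π_u(M)` of the decomposition of `M` into a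
skew-symmetric plus an upper triangular matrix. -/
def piu {n : ℕ} (M : Matrix (Fin n) (Fin n) ℝ) : Matrix (Fin n) (Fin n) ℝ :=
  Matrix.of fun i j => if i < j then M i j + M j i else if i = j then M i j else 0

/-- The skew-symmetric part `π_k(M) = M - π_u(M)`. -/
def pik {n : ℕ} (M : Matrix (Fin n) (Fin n) ℝ) : Matrix (Fin n) (Fin n) ℝ :=
  M - piu M

section

variable {n : ℕ} {p : Set (Fin n × Fin n)}

theorem blockTriangular_piu (M : Matrix (Fin n) (Fin n) ℝ) : (piu M).BlockTriangular id := by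
  intro i j (hji : j < i)
  simp [piu, hji.not_gt, hji.ne']

theorem mul_pik_sub_pik_mul (X : Matrix (Fin n) (Fin n) ℝ) :
    X * pik X - pik X * X = piu X * X - X * piu X := by
  simp only [pik, mul_sub, sub_mul]
  abel

namespace HasProfile

theorem sub {A B : Matrix (Fin n) (Fin n) ℝ} (hA : HasProfile A p) (hB : HasProfile B p) :
    HasProfile (A - B) p := fun i j hji hnp => by
  rw [Matrix.sub_apply, hA i j hji hnp, hB i j hji hnp, sub_zero]

variable {U X : Matrix (Fin n) (Fin n) ℝ}

theorem blockTriangular_mul (hp : IsProfile p) (hU : U.BlockTriangular id)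
    (hX : HasProfile X p) : HasProfile (U * X) p := by
  intro i j hji hnp
  rw [mul_apply]
  refine Finset.sum_eq_zero fun k _ => ?_
  rcases lt_or_ge k i with hki | hik
  · rw [hU hki, zero_mul]
  · rw [hX k j (hji.trans_le hik) fun hkj => hnp (hp.2 _ hkj i j hji hik le_rfl), mul_zero]

theorem mul_blockTriangular (hp : IsProfile p) (hU : U.BlockTriangular id)
    (hX : HasProfile X p) : HasProfile (X * U) p := by
  intro i j hji hnp
  rw [mul_apply]
  refine Finset.sum_eq_zero fun k _ => ?_
  rcases lt_or_ge j k with hjk | hkj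
  · rw [hU hjk, mul_zero]
  · rw [hX i k (hkj.trans_lt hji) fun hik => hnp (hp.2 _ hik i j hji le_rfl hkj), zero_mul]

end HasProfile

end

theorem stmt_13_general (n : ℕ) (p : Set (Fin n × Fin n)) (hp : IsProfile p)
    (X : Matrix (Fin n) (Fin n) ℝ) (hX : HasProfile X p) :
    HasProfile (X * pik X - pik X * X) p := by
  rw [mul_pik_sub_pik_mul]
  exact (hX.blockTriangular_mul hp (blockTriangular_piu X)).sub
    (hX.mul_blockTriangular hp (blockTriangular_piu X))

theorem stmt_13 (n : ℕ) (hn : 1 ≤ n) (p : Set (Fin n × Fin n)) (hp : IsProfile p)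
    (X : Matrix (Fin n) (Fin n) ℝ) (hX : HasProfile X p) :
    HasProfile (X * pik X - pik X * X) p :=
  stmt_13_general n p hp X hX
end

section
/- For every n ≥ 1 and every real n×n matrix X, trace( (X·π_u([X,Xᵀ]) − π_u([X,Xᵀ])·X) · Xᵀ ) = − trace( (XXᵀ − XᵀX)² ). In particular, trace(S(X)·Xᵀ) ≤ 0, with equality if and only if XXᵀ = XᵀX. -/
open Matrix

/-- The vector field `S(X) = [X, π_u([X, Xᵀ])]`. -/
def Svf {n : ℕ} (X : Matrix (Fin n) (Fin n) ℝ) : Matrix (Fin n) (Fin n) ℝ :=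
  X * piu (X * Xᵀ - Xᵀ * X) - piu (X * Xᵀ - Xᵀ * X) * X

lemma piu_add_transpose {n : ℕ} (B : Matrix (Fin n) (Fin n) ℝ) (hB : Bᵀ = B) :
    piu B + (piu B)ᵀ = (2 : ℝ) • B := by
  ext i j
  have hs : B j i = B i j := by conv_lhs => rw [← hB, transpose_apply]
  simp only [piu, Matrix.add_apply, Matrix.transpose_apply, Matrix.of_apply, Matrix.smul_apply,
    smul_eq_mul]
  rcases lt_trichotomy i j with h | h | h
  · rw [if_pos h, if_neg (asymm h), if_neg (ne_of_gt h)]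
    linarith
  · subst h
    simp [two_mul]
  · rw [if_neg (asymm h), if_neg (ne_of_gt h), if_pos h]
    linarith

lemma trace_piu_mul {n : ℕ} (B : Matrix (Fin n) (Fin n) ℝ) (hB : Bᵀ = B) :
    (piu B * B).trace = (B * B).trace := by
  have h1 : ((piu B)ᵀ * B).trace = (piu B * B).trace := by
    calc ((piu B)ᵀ * B).trace = (((piu B)ᵀ * B)ᵀ).trace := (trace_transpose _).symm
    _ = (Bᵀ * piu B).trace := by rw [transpose_mul, transpose_transpose]
    _ = (B * piu B).trace := by rw [hB]
    _ = (piu B * B).trace := trace_mul_comm _ _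
  have h2 : ((piu B + (piu B)ᵀ) * B).trace = ((2:ℝ) • (B * B)).trace := by
    rw [piu_add_transpose B hB, smul_mul_assoc]
  rw [add_mul, trace_add, h1, trace_smul] at h2
  have := h2
  simp only [smul_eq_mul] at this
  linarith

lemma trace_sq_symm {n : ℕ} (B : Matrix (Fin n) (Fin n) ℝ) (hB : Bᵀ = B) :
    (B * B).trace = ∑ i, ∑ j, (B i j) ^ 2 := by
  rw [Matrix.trace]
  apply Finset.sum_congr rfl
  intro i _
  rw [Matrix.diag_apply, Matrix.mul_apply]
  apply Finset.sum_congr rfl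
  intro j _
  have hs : B j i = B i j := by conv_lhs => rw [← hB, transpose_apply]
  rw [hs]; ring

theorem stmt_14 (n : ℕ) (hn : 1 ≤ n) (X : Matrix (Fin n) (Fin n) ℝ) :
    (Svf X * Xᵀ).trace = -((X * Xᵀ - Xᵀ * X) ^ 2).trace ∧
    (Svf X * Xᵀ).trace ≤ 0 ∧
    ((Svf X * Xᵀ).trace = 0 ↔ X * Xᵀ = Xᵀ * X) := by
  set B := X * Xᵀ - Xᵀ * X with hBdef
  have hB : Bᵀ = B := by
    rw [hBdef, transpose_sub, transpose_mul, transpose_mul, transpose_transpose]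
  have key : (Svf X * Xᵀ).trace = -((B * B).trace) := by
    have e1 : (X * piu B * Xᵀ).trace = (piu B * (Xᵀ * X)).trace := by
      rw [trace_mul_cycle, ← mul_assoc, trace_mul_comm, mul_assoc]
    have e2 : (piu B * X * Xᵀ).trace = (piu B * (X * Xᵀ)).trace := by
      rw [mul_assoc]
    rw [Svf, sub_mul, trace_sub, e1, e2, ← trace_sub, ← mul_sub]
    have : Xᵀ * X - X * Xᵀ = -B := (neg_sub _ _).symm
    rw [this, mul_neg, trace_neg, trace_piu_mul B hB]
  have hsum : (B * B).trace = ∑ i, ∑ j, (B i j) ^ 2 := trace_sq_symm B hB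
  have hnonneg : 0 ≤ (B * B).trace := by
    rw [hsum]
    positivity
  refine ⟨by rw [key, pow_two], by rw [key]; linarith, ?_⟩
  constructor
  · intro h
    rw [key, neg_eq_zero, hsum] at h
    have hall : ∀ i ∈ Finset.univ, ∑ j, (B i j)^2 = 0 := by
      intro i _
      have := (Finset.sum_eq_zero_iff_of_nonneg (by intro i _; positivity)).mp h i (Finset.mem_univ i)
      exact this
    have hB0 : B = 0 := by
      ext i j
      have := (Finset.sum_eq_zero_iff_of_nonneg (by intro j _; positivity)).mp
        (hall i (Finset.mem_univ i)) j (Finset.mem_univ j)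
      have := pow_eq_zero_iff (n := 2) (by norm_num) |>.mp this
      simpa using this
    exact sub_eq_zero.mp hB0
  · intro h
    have hB0 : B = 0 := by rw [hBdef, h, sub_self]
    rw [key, hB0]
    simp
end

section
/- For every n ≥ 1 and every real n×n matrix X, S(X) = 0 if and only if X is normal, i.e., XXᵀ = XᵀX. -/
open Matrix

lemma piu_sym_trace_zero {n : ℕ} (A : Matrix (Fin n) (Fin n) ℝ)
    (hA : Aᵀ = A) (h : Matrix.trace (piu A * A) = 0) : A = 0 := by
  have hsym : ∀ i j, A j i = A i j := fun i j => by
    conv_rhs => rw [← hA, Matrix.transpose_apply]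
  have hnn : ∀ i j : Fin n, (0:ℝ) ≤ piu A i j * A j i := by
    intro i j
    simp only [piu, Matrix.of_apply]
    rcases lt_trichotomy i j with hij | hij | hij
    · rw [if_pos hij, hsym i j]
      nlinarith [sq_nonneg (A i j)]
    · rw [if_neg (lt_irrefl _ ∘ (hij ▸ ·)), if_pos hij, hij]
      exact mul_self_nonneg _
    · rw [if_neg (asymm hij), if_neg (ne_of_gt hij), zero_mul]
  have htr : ∑ i : Fin n, ∑ j : Fin n, piu A i j * A j i = 0 := by
    rw [Matrix.trace] at h
    simpa [Matrix.diag, Matrix.mul_apply] using h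
  have key : ∀ i j : Fin n, piu A i j * A j i = 0 := by
    intro i j
    have h1 := (Finset.sum_eq_zero_iff_of_nonneg
      (fun i _ => Finset.sum_nonneg (fun j _ => hnn i j))).mp htr i (Finset.mem_univ i)
    exact (Finset.sum_eq_zero_iff_of_nonneg (fun j _ => hnn i j)).mp h1 j (Finset.mem_univ j)
  have hle : ∀ i j : Fin n, i ≤ j → A i j = 0 := by
    intro i j hij
    have := key i j
    simp only [piu, Matrix.of_apply] at this
    rcases lt_or_eq_of_le hij with h' | h'
    · rw [if_pos h', hsym i j] at this
      nlinarith [sq_nonneg (A i j)]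
    · subst h'
      rw [if_neg (lt_irrefl i), if_pos rfl] at this
      nlinarith [sq_nonneg (A i i)]
  ext i j
  rcases le_total i j with h' | h'
  · simpa using hle i j h'
  · simpa [hsym j i] using hle j i h'

theorem stmt_15 (n : ℕ) (hn : 1 ≤ n) (X : Matrix (Fin n) (Fin n) ℝ) :
    Svf X = 0 ↔ X * Xᵀ = Xᵀ * X := by
  set A := X * Xᵀ - Xᵀ * X with hAdef
  constructor
  · intro h
    have hcomm : X * piu A = piu A * X := by
      have := sub_eq_zero.mp h
      exact this
    have hA : Aᵀ = A := by
      simp [hAdef, Matrix.transpose_sub, Matrix.transpose_mul]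
    have htr : Matrix.trace (piu A * A) = 0 := by
      have h1 : Matrix.trace (piu A * (Xᵀ * X)) = Matrix.trace (piu A * (X * Xᵀ)) := by
        calc Matrix.trace (piu A * (Xᵀ * X))
            = Matrix.trace (X * (piu A * Xᵀ)) := by
              rw [← Matrix.mul_assoc, Matrix.trace_mul_comm]
          _ = Matrix.trace ((piu A * X) * Xᵀ) := by
              rw [← Matrix.mul_assoc, hcomm]
          _ = Matrix.trace (piu A * (X * Xᵀ)) := by rw [Matrix.mul_assoc]
      rw [hAdef, Matrix.mul_sub, Matrix.trace_sub, h1, sub_self]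
    have := piu_sym_trace_zero A hA htr
    exact sub_eq_zero.mp this
  · intro h
    have h0 : piu (0 : Matrix (Fin n) (Fin n) ℝ) = 0 := by
      ext i j; simp [piu]
    simp [Svf, h, h0]
end

section
/- Let n ≥ 1, let A : ℝ → M_n(ℝ) be continuous, and let f : ℝ → M_n(ℝ) be differentiable with f′(t) = f(t)·A(t) − A(t)·f(t) for all t ∈ ℝ. Then the characteristic polynomial of f(t) equals the characteristic polynomial of f(0) for all t ∈ ℝ; in particular the spectrum of f(t) is constant in t. -/
/-!
By Jacobi's formula, `(det g)' = tr (g' · adj g)`. If `g' = g A - A g`, cycling the trace and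
using `adj g · g = g · adj g = det g • 1` turns both terms into `det g · tr A`, so `det g` is
constant. Since `x · 1 - f` is again of Lax form for every scalar `x`, the characteristic
polynomial of `f t` takes values independent of `t` at every point, hence is independent of `t`.
-/

open Matrix

attribute [local instance] Matrix.normedAddCommGroup Matrix.normedSpace

namespace Matrix

variable {ι : Type*} [Fintype ι] [DecidableEq ι]

section CommRing

variable {R : Type*} [CommRing R]

theorem sum_det_updateRow_eq_trace_mul_adjugate (M N : Matrix ι ι R) :
    ∑ i, (M.updateRow i (N i)).det = trace (N * adjugate M) := by
  refine Finset.sum_congr rfl fun i _ => ?_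
  rw [← cramer_transpose_apply, cramer_eq_adjugate_mulVec, ← adjugate_transpose]
  simp [mulVec, mul_apply, dotProduct, mul_comm]

theorem trace_commutator_mul_adjugate_eq_zero (M A : Matrix ι ι R) :
    trace ((M * A - A * M) * adjugate M) = 0 := by
  rw [sub_mul, trace_sub, trace_mul_cycle M A (adjugate M), adjugate_mul, mul_assoc, mul_adjugate]
  simp

end CommRing

section Jacobi

variable {𝕜 : Type*} [NontriviallyNormedField 𝕜]

noncomputable def detRowContinuousMultilinear :
    ContinuousMultilinearMap 𝕜 (fun _ : ι => ι → 𝕜) 𝕜 where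
  toMultilinearMap := (detRowAlternating : (ι → 𝕜) [⋀^ι]→ₗ[𝕜] 𝕜).toMultilinearMap
  cont := continuous_id.matrix_det

theorem _root_.HasDerivAt.matrix_det {g : 𝕜 → Matrix ι ι 𝕜} {g' : Matrix ι ι 𝕜} {t : 𝕜}
    (hg : HasDerivAt g g' t) :
    HasDerivAt (fun s => (g s).det) (trace (g' * adjugate (g t))) t := by
  have hrows : ∀ i, HasDerivAt (fun s => g s i) (g' i) t := fun i =>
    (ContinuousLinearMap.proj (R := 𝕜) (φ := fun _ : ι => ι → 𝕜) i).hasFDerivAt.comp_hasDerivAt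
      t hg
  have hdet := (HasFDerivAt.multilinear_comp detRowContinuousMultilinear
    (g := fun i s => g s i) (fun i => (hrows i).hasFDerivAt)).hasDerivAt
  simp only [_root_.sum_apply, ContinuousLinearMap.comp_apply,
    ContinuousLinearMap.toSpanSingleton_apply, one_smul,
    ContinuousMultilinearMap.toContinuousLinearMap_apply] at hdet
  rw [← sum_det_updateRow_eq_trace_mul_adjugate]
  convert hdet using 1 <;> rfl

end Jacobi

section Lax

variable {𝕜 : Type*} [RCLike 𝕜] {f A : 𝕜 → Matrix ι ι 𝕜}

theorem det_eq_of_hasDerivAt_lax (hf : ∀ t, HasDerivAt f (f t * A t - A t * f t) t) (s t : 𝕜) :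
    (f s).det = (f t).det := by
  have hdet : ∀ t, HasDerivAt (fun s => (f s).det) 0 t := fun t => by
    simpa only [trace_commutator_mul_adjugate_eq_zero] using (hf t).matrix_det
  exact is_const_of_deriv_eq_zero (fun t => (hdet t).differentiableAt) (fun t => (hdet t).deriv)
    s t

theorem hasDerivAt_scalar_sub_lax (hf : ∀ t, HasDerivAt f (f t * A t - A t * f t) t)
    (x t : 𝕜) :
    HasDerivAt (fun s => scalar ι x - f s)
      ((scalar ι x - f t) * A t - A t * (scalar ι x - f t)) t := by
  refine ((hf t).const_sub (scalar ι x)).congr_deriv ?_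
  rw [sub_mul, mul_sub, (scalar_commute x (fun _ => Commute.all _ _) (A t)).eq]
  abel

theorem charpoly_eq_of_hasDerivAt_lax (hf : ∀ t, HasDerivAt f (f t * A t - A t * f t) t)
    (s t : 𝕜) : (f s).charpoly = (f t).charpoly :=
  Polynomial.funext fun x => by
    simpa only [eval_charpoly] using det_eq_of_hasDerivAt_lax (hasDerivAt_scalar_sub_lax hf x) s t

end Lax

end Matrix

theorem stmt_18_general (n : ℕ) (A : ℝ → Matrix (Fin n) (Fin n) ℝ)
    (f : ℝ → Matrix (Fin n) (Fin n) ℝ)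
    (hf : ∀ t : ℝ, HasDerivAt f (f t * A t - A t * f t) t) :
    ∀ t : ℝ, (f t).charpoly = (f 0).charpoly :=
  fun t => charpoly_eq_of_hasDerivAt_lax hf t 0

theorem stmt_18 (n : ℕ) (hn : 1 ≤ n) (A : ℝ → Matrix (Fin n) (Fin n) ℝ)
    (hA : Continuous A) (f : ℝ → Matrix (Fin n) (Fin n) ℝ)
    (hf : ∀ t : ℝ, HasDerivAt f (f t * A t - A t * f t) t) :
    ∀ t : ℝ, (f t).charpoly = (f 0).charpoly :=
  stmt_18_general n A f hf
end
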